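/- In the partic algebra PP_N, for all 1 ≤ i ≤ N-1 and all nonnegative integers m, m', k_1, ..., k_{i-1}: a_{i-1}^{m'} a_i^m a_1^{k_1} a_2^{k_2} ⋯ a_{i-2}^{k_{i-2}} a_{i-1}^m = a_i^m a_{i-1}^{m'} a_1^{k_1} a_2^{k_2} ⋯ a_{i-2}^{k_{i-2}} a_{i-1}^m whenever the expressions on both sides involve only generators a_1,...,a_i (classical analogue of the affine partic relation). -/
import Mathlib


section Gen
variable {M : Type*} [Monoid M] {b c d : M}

/-- `c^(m+1) * b = c * b * c^m` from the plactic relation `c*b*c = c*c*b`. -/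
lemma gen_cmb (h1 : c * b * c = c * c * b) : ∀ m : ℕ, c ^ (m + 1) * b = c * b * c ^ m := by
  intro m
  induction m with
  | zero => simp
  | succ n ih =>
    calc c ^ (n + 2) * b = c * (c ^ (n + 1) * b) := by rw [pow_succ']; rw [mul_assoc]
    _ = c * (c * b * c ^ n) := by rw [ih]
    _ = c * c * b * c ^ n := by simp [mul_assoc]
    _ = c * b * c * c ^ n := by rw [← h1]
    _ = c * b * c ^ (n + 1) := by rw [mul_assoc, ← pow_succ']

lemma gen_cbpow (h1 : c * b * c = c * c * b) : ∀ m : ℕ, c ^ m * b ^ m = (c * b) ^ m := by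
  intro m
  induction m with
  | zero => simp
  | succ n ih =>
    calc c ^ (n + 1) * b ^ (n + 1) = c ^ (n + 1) * b * b ^ n := by rw [pow_succ' b, ← mul_assoc]
    _ = c * b * c ^ n * b ^ n := by rw [gen_cmb h1]
    _ = c * b * (c ^ n * b ^ n) := by rw [mul_assoc]
    _ = c * b * (c * b) ^ n := by rw [ih]
    _ = (c * b) ^ (n + 1) := by rw [← pow_succ']

lemma gen_bcbpow (h2 : b * c * b = c * b * b) : ∀ m : ℕ, b * (c * b) ^ m = (c * b) ^ m * b := by
  intro m
  induction m with
  | zero => simp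
  | succ n ih =>
    calc b * (c * b) ^ (n + 1) = b * (c * b) * (c * b) ^ n := by rw [pow_succ', ← mul_assoc]
    _ = c * b * b * (c * b) ^ n := by rw [← mul_assoc, h2]
    _ = c * b * (b * (c * b) ^ n) := by simp [mul_assoc]
    _ = c * b * ((c * b) ^ n * b) := by rw [ih]
    _ = (c * b) ^ (n + 1) * b := by rw [pow_succ']; simp [mul_assoc]

lemma gen_bdpow (h3 : d * b * d = b * d * d) : ∀ k : ℕ, b * d ^ (k + 1) = d ^ k * (b * d) := by
  intro k
  induction k with
  | zero => simp
  | succ n ih =>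
    calc b * d ^ (n + 2) = b * d ^ (n + 1) * d := by rw [pow_succ, ← mul_assoc]
    _ = d ^ n * (b * d) * d := by rw [ih]
    _ = d ^ n * (b * d * d) := by simp [mul_assoc]
    _ = d ^ n * (d * b * d) := by rw [← h3]
    _ = d ^ (n + 1) * (b * d) := by rw [pow_succ]; simp [mul_assoc]

end Gen

section Gen2
variable {M : Type*} [Monoid M] {b c d : M}

lemma gen_K1 (h1 : c * b * c = c * c * b) (h2 : b * c * b = c * b * b)
    (h4 : c * d = d * c) (h5 : b * d * c * b = c * b * d * b) :
    ∀ n : ℕ, b * c ^ (n + 1) * d * b ^ (n + 1) = c ^ (n + 1) * b * d * b ^ (n + 1) := by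
  intro n
  have hcd : Commute c d := h4
  calc b * c ^ (n + 1) * d * b ^ (n + 1)
      = b * (c ^ (n + 1) * d) * b ^ (n + 1) := by rw [mul_assoc b]
    _ = b * (d * c ^ (n + 1)) * b ^ (n + 1) := by rw [(hcd.pow_left (n+1)).eq]
    _ = b * d * (c ^ (n + 1) * b ^ (n + 1)) := by simp [mul_assoc]
    _ = b * d * (c * b) ^ (n + 1) := by rw [gen_cbpow h1]
    _ = b * d * (c * b * (c * b) ^ n) := by rw [pow_succ']
    _ = b * d * c * b * (c * b) ^ n := by simp [mul_assoc]
    _ = c * b * d * b * (c * b) ^ n := by rw [h5]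
    _ = c * b * d * (b * (c * b) ^ n) := by simp [mul_assoc]
    _ = c * b * d * ((c * b) ^ n * b) := by rw [gen_bcbpow h2]
    _ = c * b * (d * c ^ n) * (b ^ n * b) := by rw [← gen_cbpow h1]; simp [mul_assoc]
    _ = c * b * (c ^ n * d) * (b ^ n * b) := by rw [(hcd.pow_left n).eq]
    _ = c * b * c ^ n * d * b ^ (n + 1) := by rw [← pow_succ]; simp [mul_assoc]
    _ = c ^ (n + 1) * b * d * b ^ (n + 1) := by rw [gen_cmb h1]

lemma gen_K (h1 : c * b * c = c * c * b) (h2 : b * c * b = c * b * b)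
    (h3 : d * b * d = b * d * d) (h4 : c * d = d * c) (h5 : b * d * c * b = c * b * d * b) :
    ∀ m k : ℕ, b * c ^ m * d ^ k * b ^ m = c ^ m * b * d ^ k * b ^ m := by
  intro m k
  have hcd : Commute c d := h4
  match m, k with
  | 0, k => simp
  | (n+1), 0 =>
    calc b * c ^ (n+1) * d ^ 0 * b ^ (n+1)
        = b * (c ^ (n+1) * b ^ (n+1)) := by simp [mul_assoc]
      _ = b * (c * b) ^ (n+1) := by rw [gen_cbpow h1]
      _ = (c * b) ^ (n+1) * b := by rw [gen_bcbpow h2]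
      _ = c ^ (n+1) * b ^ (n+1) * b := by rw [gen_cbpow h1]
      _ = c ^ (n+1) * (b ^ (n+1) * b) := by rw [mul_assoc]
      _ = c ^ (n+1) * (b * b ^ (n+1)) := by rw [← pow_succ, ← pow_succ']
      _ = c ^ (n+1) * b * d ^ 0 * b ^ (n+1) := by simp [mul_assoc]
  | (n+1), (p+1) =>
    calc b * c ^ (n+1) * d ^ (p+1) * b ^ (n+1)
        = b * (c ^ (n+1) * d ^ (p+1)) * b ^ (n+1) := by rw [mul_assoc b]
      _ = b * (d ^ (p+1) * c ^ (n+1)) * b ^ (n+1) := by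
          rw [((hcd.pow_left (n+1)).pow_right (p+1)).eq]
      _ = b * d ^ (p+1) * c ^ (n+1) * b ^ (n+1) := by simp [mul_assoc]
      _ = d ^ p * (b * d) * c ^ (n+1) * b ^ (n+1) := by rw [gen_bdpow h3]
      _ = d ^ p * (b * (d * c ^ (n+1))) * b ^ (n+1) := by simp [mul_assoc]
      _ = d ^ p * (b * (c ^ (n+1) * d)) * b ^ (n+1) := by rw [(hcd.pow_left (n+1)).symm.eq]
      _ = d ^ p * (b * c ^ (n+1) * d * b ^ (n+1)) := by simp [mul_assoc]
      _ = d ^ p * (c ^ (n+1) * b * d * b ^ (n+1)) := by rw [gen_K1 h1 h2 h4 h5]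
      _ = d ^ p * c ^ (n+1) * (b * d) * b ^ (n+1) := by simp [mul_assoc]
      _ = c ^ (n+1) * d ^ p * (b * d) * b ^ (n+1) := by
          rw [((hcd.pow_left (n+1)).pow_right p).symm.eq]
      _ = c ^ (n+1) * (d ^ p * (b * d)) * b ^ (n+1) := by rw [mul_assoc (c^(n+1))]
      _ = c ^ (n+1) * (b * d ^ (p+1)) * b ^ (n+1) := by rw [← gen_bdpow h3]
      _ = c ^ (n+1) * b * d ^ (p+1) * b ^ (n+1) := by rw [← mul_assoc]

end Gen2

section Gen3
variable {M : Type*} [Monoid M] {b c P : M}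

lemma gen_Mgen (h1 : c * b * c = c * c * b) (h2 : b * c * b = c * b * b)
    (hP : ∀ m : ℕ, b * c ^ m * P * b ^ m = c ^ m * b * P * b ^ m) :
    ∀ j m : ℕ, b * c ^ m * (b ^ j * P) * b ^ m = c ^ m * b ^ (j + 1) * P * b ^ m := by
  intro j
  induction j with
  | zero =>
    intro m
    calc b * c ^ m * (b ^ 0 * P) * b ^ m = b * c ^ m * P * b ^ m := by simp
      _ = c ^ m * b * P * b ^ m := hP m
      _ = c ^ m * b ^ 1 * P * b ^ m := by rw [pow_one]
  | succ j ih =>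
    intro m
    match m with
    | 0 =>
      calc b * c ^ 0 * (b ^ (j+1) * P) * b ^ 0 = b * (b ^ (j+1) * P) := by simp
        _ = b ^ (j+2) * P := by rw [← mul_assoc, ← pow_succ']
        _ = c ^ 0 * b ^ (j+2) * P * b ^ 0 := by simp
    | (n+1) =>
      calc b * c ^ (n+1) * (b ^ (j+1) * P) * b ^ (n+1)
          = b * (c ^ (n+1) * b) * (b ^ j * P) * b ^ (n+1) := by
            simp only [pow_succ' b j, mul_assoc]
        _ = b * (c * b * c ^ n) * (b ^ j * P) * b ^ (n+1) := by rw [gen_cmb h1]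
        _ = (b * c * b) * (c ^ n * (b ^ j * P)) * b ^ (n+1) := by simp only [mul_assoc]
        _ = (c * b * b) * (c ^ n * (b ^ j * P)) * b ^ (n+1) := by rw [h2]
        _ = c * b * (b * c ^ n * (b ^ j * P) * b ^ n) * b := by
            simp only [pow_succ b n, mul_assoc]
        _ = c * b * (c ^ n * b ^ (j+1) * P * b ^ n) * b := by rw [ih n]
        _ = (c * b * c ^ n) * (b ^ (j+1) * P) * (b ^ n * b) := by simp only [mul_assoc]
        _ = (c ^ (n+1) * b) * (b ^ (j+1) * P) * (b ^ n * b) := by rw [gen_cmb h1]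
        _ = c ^ (n+1) * (b * b ^ (j+1)) * (P * b ^ (n+1)) := by
            rw [← pow_succ]; simp only [mul_assoc]
        _ = c ^ (n+1) * b ^ (j+2) * P * b ^ (n+1) := by
            rw [← pow_succ']; simp only [mul_assoc]

lemma gen_N (h1 : c * b * c = c * c * b) (h2 : b * c * b = c * b * b)
    (hP : ∀ m : ℕ, b * c ^ m * P * b ^ m = c ^ m * b * P * b ^ m) (m : ℕ) :
    ∀ m' j : ℕ, b ^ m' * c ^ m * (b ^ j * P) * b ^ m = c ^ m * b ^ (m' + j) * P * b ^ m := by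
  intro m'
  induction m' with
  | zero => intro j; simp [mul_assoc]
  | succ n ih =>
    intro j
    calc b ^ (n+1) * c ^ m * (b ^ j * P) * b ^ m
        = b ^ n * (b * c ^ m * (b ^ j * P) * b ^ m) := by
          simp only [pow_succ b n, mul_assoc]
      _ = b ^ n * (c ^ m * b ^ (j+1) * P * b ^ m) := by rw [gen_Mgen h1 h2 hP]
      _ = b ^ n * c ^ m * (b ^ (j+1) * P) * b ^ m := by simp only [mul_assoc]
      _ = c ^ m * b ^ (n + (j+1)) * P * b ^ m := ih (j+1)
      _ = c ^ m * b ^ (n + 1 + j) * P * b ^ m := by ring_nf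

end Gen3




inductive ParticRel (K : Type*) [CommRing K] (N : ℕ) :
    FreeAlgebra K (Fin (N - 1)) → FreeAlgebra K (Fin (N - 1)) → Prop
  | plac1 : ∀ i j : Fin (N - 1), (i : ℕ) = (j : ℕ) + 1 →
      ParticRel K N (FreeAlgebra.ι K i * FreeAlgebra.ι K j * FreeAlgebra.ι K i)
        (FreeAlgebra.ι K i * FreeAlgebra.ι K i * FreeAlgebra.ι K j)
  | plac2 : ∀ i j : Fin (N - 1), (j : ℕ) = (i : ℕ) + 1 →
      ParticRel K N (FreeAlgebra.ι K i * FreeAlgebra.ι K j * FreeAlgebra.ι K i)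
        (FreeAlgebra.ι K j * FreeAlgebra.ι K i * FreeAlgebra.ι K i)
  | comm : ∀ i j : Fin (N - 1), (i : ℕ) + 1 < (j : ℕ) →
      ParticRel K N (FreeAlgebra.ι K i * FreeAlgebra.ι K j)
        (FreeAlgebra.ι K j * FreeAlgebra.ι K i)
  | partic : ∀ lo mid hi : Fin (N - 1), (mid : ℕ) = (lo : ℕ) + 1 → (hi : ℕ) = (mid : ℕ) + 1 →
      ParticRel K N
        (FreeAlgebra.ι K mid * FreeAlgebra.ι K lo * FreeAlgebra.ι K hi * FreeAlgebra.ι K mid)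
        (FreeAlgebra.ι K hi * FreeAlgebra.ι K mid * FreeAlgebra.ι K lo * FreeAlgebra.ι K mid)

/-- The partic algebra `PP_N`, with generators `a_1, …, a_{N-1}`. -/
abbrev ParticAlgebra (K : Type*) [CommRing K] (N : ℕ) := RingQuot (ParticRel K N)

/-- The generator `a_i` of the partic algebra, for `1 ≤ i ≤ N-1` (junk value `0`
outside that range). -/
noncomputable def ppa (K : Type*) [CommRing K] (N : ℕ) (i : ℕ) : ParticAlgebra K N :=
  if h : 1 ≤ i ∧ i ≤ N - 1 then
    RingQuot.mkAlgHom K (ParticRel K N) (FreeAlgebra.ι K ⟨i - 1, by omega⟩) else 0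

/-- Classical analogue of the affine partic relation: in the partic algebra, for `3 ≤ i ≤ N-1`
and all nonnegative `m, m', k_1, …, k_{i-2}`,
`a_{i-1}^{m'} a_i^m (a_1^{k_1} ⋯ a_{i-2}^{k_{i-2}}) a_{i-1}^m
  = a_i^m a_{i-1}^{m'} (a_1^{k_1} ⋯ a_{i-2}^{k_{i-2}}) a_{i-1}^m`. -/
theorem stmt19 (K : Type*) [Field K] (N : ℕ) (hN : 3 ≤ N) (i : ℕ)
    (h1 : 3 ≤ i) (h2 : i ≤ N - 1) (m m' : ℕ) (kk : ℕ → ℕ) :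
    ppa K N (i - 1) ^ m' * ppa K N i ^ m *
        ((List.range (i - 2)).map fun t => ppa K N (t + 1) ^ kk (t + 1)).prod *
        ppa K N (i - 1) ^ m =
      ppa K N i ^ m * ppa K N (i - 1) ^ m' *
        ((List.range (i - 2)).map fun t => ppa K N (t + 1) ^ kk (t + 1)).prod *
        ppa K N (i - 1) ^ m := by
  classical
  have hb1 : 1 ≤ i - 1 := by omega
  have hb2 : i - 1 ≤ N - 1 := by omega
  have hc1 : 1 ≤ i := by omega
  have hd1 : 1 ≤ i - 2 := by omega
  have hd2 : i - 2 ≤ N - 1 := by omega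
  set f := RingQuot.mkAlgHom K (ParticRel K N) with hf
  have ppa_eq : ∀ (j : ℕ) (hj : j - 1 < N - 1) (hj1 : 1 ≤ j) (hj2 : j ≤ N - 1),
      ppa K N j = f (FreeAlgebra.ι K ⟨j - 1, hj⟩) := by
    intro j hj hj1 hj2
    rw [ppa, dif_pos ⟨hj1, hj2⟩]
  have hI2 : i - 3 < N - 1 := by omega
  have hI1 : i - 2 < N - 1 := by omega
  have hI0 : i - 1 < N - 1 := by omega
  set I2 : Fin (N - 1) := ⟨i - 3, hI2⟩ with hI2d
  set I1 : Fin (N - 1) := ⟨i - 2, hI1⟩ with hI1d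
  set I0 : Fin (N - 1) := ⟨i - 1, hI0⟩ with hI0d
  set b := ppa K N (i - 1) with hbdef
  set c := ppa K N i with hcdef
  set d := ppa K N (i - 2) with hddef
  have hb : b = f (FreeAlgebra.ι K I1) := by
    rw [hbdef, ppa_eq (i - 1) (by omega) hb1 hb2]
    try rfl
  have hc : c = f (FreeAlgebra.ι K I0) := by
    rw [hcdef, ppa_eq i (by omega) hc1 h2]
  have hd : d = f (FreeAlgebra.ι K I2) := by
    rw [hddef, ppa_eq (i - 2) (by omega) hd1 hd2]
    try rfl

  have e1 : (I1 : ℕ) = (I2 : ℕ) + 1 := by simp [hI1d, hI2d]; omega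
  have e0 : (I0 : ℕ) = (I1 : ℕ) + 1 := by simp [hI0d, hI1d]; omega
  have r1 : c * b * c = c * c * b := by
    rw [hb, hc]
    simp only [← map_mul]
    exact RingQuot.mkAlgHom_rel K (ParticRel.plac1 I0 I1 e0)
  have r2 : b * c * b = c * b * b := by
    rw [hb, hc]
    simp only [← map_mul]
    exact RingQuot.mkAlgHom_rel K (ParticRel.plac2 I1 I0 e0)
  have r3 : d * b * d = b * d * d := by
    rw [hb, hd]
    simp only [← map_mul]
    exact RingQuot.mkAlgHom_rel K (ParticRel.plac2 I2 I1 e1)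
  have r4 : c * d = d * c := by
    rw [hc, hd]
    simp only [← map_mul]
    exact (RingQuot.mkAlgHom_rel K (ParticRel.comm I2 I0 (by simp [hI2d, hI0d]; omega))).symm
  have r5 : b * d * c * b = c * b * d * b := by
    rw [hb, hc, hd]
    simp only [← map_mul]
    exact RingQuot.mkAlgHom_rel K (ParticRel.partic I2 I1 I0 e1 e0)
  -- the product P and its decomposition
  set F : ℕ → ParticAlgebra K N := fun t => ppa K N (t + 1) ^ kk (t + 1) with hF
  set P : ParticAlgebra K N := ((List.range (i - 2)).map F).prod with hP
  set P' : ParticAlgebra K N := ((List.range (i - 3)).map F).prod with hP'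
  have hsplit : P = P' * d ^ kk (i - 2) := by
    have h32 : i - 2 = (i - 3) + 1 := by omega
    rw [hP, hP', hddef, h32, List.range_succ, List.map_append, List.prod_append,
      List.map_singleton, List.prod_singleton]
    try simp only [hF]
  -- P' commutes with b and c
  have hcomm : ∀ (t : ℕ), t < i - 3 → ∀ (J : Fin (N - 1)), (t : ℕ) + 1 < (J : ℕ) →
      Commute (f (FreeAlgebra.ι K J)) (ppa K N (t + 1)) := by
    intro t ht J hJ
    have htf : t < N - 1 := by omega
    have : ppa K N (t + 1) = f (FreeAlgebra.ι K ⟨t, htf⟩) :=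
      ppa_eq (t + 1) (by omega) (by omega) (by omega)
    rw [this]
    show _ = _
    simp only [← map_mul]
    exact (RingQuot.mkAlgHom_rel K (ParticRel.comm ⟨t, htf⟩ J hJ)).symm
  have hbP' : Commute b P' := by
    rw [hP']
    apply Commute.list_prod_right
    intro x hx
    simp only [List.mem_map, List.mem_range] at hx
    obtain ⟨t, ht, rfl⟩ := hx
    rw [hF, hb]
    exact (hcomm t ht I1 (by simp [hI1d]; omega)).pow_right _
  have hcP' : Commute c P' := by
    rw [hP']
    apply Commute.list_prod_right
    intro x hx
    simp only [List.mem_map, List.mem_range] at hx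
    obtain ⟨t, ht, rfl⟩ := hx
    rw [hF, hc]
    exact (hcomm t ht I0 (by simp [hI0d]; omega)).pow_right _
  -- the base lemma
  have hbase : ∀ m : ℕ, b * c ^ m * P * b ^ m = c ^ m * b * P * b ^ m := by
    intro n
    set k := kk (i - 2)
    have hx : Commute (b * c ^ n) P' := (hbP'.mul_left (hcP'.pow_left n))
    have hy : Commute (c ^ n * b) P' := ((hcP'.pow_left n).mul_left hbP')
    calc b * c ^ n * P * b ^ n
        = (b * c ^ n) * P' * (d ^ k * b ^ n) := by rw [hsplit]; simp only [mul_assoc]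
      _ = P' * (b * c ^ n) * (d ^ k * b ^ n) := by rw [hx.eq]
      _ = P' * (b * c ^ n * d ^ k * b ^ n) := by simp only [mul_assoc]
      _ = P' * (c ^ n * b * d ^ k * b ^ n) := by rw [gen_K r1 r2 r3 r4 r5]
      _ = P' * (c ^ n * b) * (d ^ k * b ^ n) := by simp only [mul_assoc]
      _ = (c ^ n * b) * P' * (d ^ k * b ^ n) := by rw [hy.eq]
      _ = c ^ n * b * P * b ^ n := by rw [hsplit]; simp only [mul_assoc]
  have main := gen_N r1 r2 hbase m m' 0
  simp only [pow_zero, one_mul, Nat.add_zero] at main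
  calc b ^ m' * c ^ m * P * b ^ m = c ^ m * b ^ m' * P * b ^ m := main
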